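/- Let C ⊆ ℝ^d be a closed convex cone with nonempty dual cone interior, J: 𝒳 → ℝ^d a function on a nonempty set 𝒳, and suppose for each ζ ∈ C⁺\{0} there exists y_ζ ∈ 𝒳 minimizing ζ·J(·) over 𝒳. Set M = {y_ζ : ζ ∈ C⁺\{0}} and Γ_M = cl co ⋃_{y∈M}(J(y)+C). Then for every y₀ ∈ 𝒳, J(y₀) ∈ Γ_M. -/

import Mathlib

/-!
Suppose `J y₀` lies outside the closed convex set `Γ_M`. A separating hyperplane gives `ζ` with
`ζ·J y₀ < ζ·x` for all `x ∈ Γ_M`. Since `Γ_M` contains the translated cones `J y + C`, the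
functional `ζ` is bounded below on a cone translate, so `ζ ∈ C⁺`; and `ζ ≠ 0` because `Γ_M` is
nonempty (the dual cone has interior, hence a nonzero element). But then `y_ζ ∈ M` and
`J y_ζ ∈ Γ_M`, so `ζ·J y_ζ > ζ·J y₀`, contradicting the minimality of `y_ζ`.
-/

open Pointwise

open scoped RealInnerProductSpace

section

variable {E : Type*} [NormedAddCommGroup E] [InnerProductSpace ℝ E]

theorem exists_inner_lt_of_notMem_closure_convexHull [CompleteSpace E] {S : Set E} {x : E}
    (hx : x ∉ closure (convexHull ℝ S)) : ∃ ζ : E, ∀ s ∈ S, ⟪ζ, x⟫ < ⟪ζ, s⟫ := by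
  obtain ⟨f, u, hfx, hf⟩ :=
    geometric_hahn_banach_point_closed (convex_convexHull ℝ S).closure isClosed_closure hx
  refine ⟨(InnerProductSpace.toDual ℝ E).symm f, fun s hs => ?_⟩
  rw [InnerProductSpace.toDual_symm_apply, InnerProductSpace.toDual_symm_apply]
  exact hfx.trans (hf s (subset_closure (subset_convexHull ℝ S hs)))

theorem inner_nonneg_of_forall_lt_inner_add_smul {ζ a c : E} {u : ℝ}
    (h : ∀ s : ℝ, 0 ≤ s → u < ⟪ζ, a + s • c⟫) : 0 ≤ ⟪ζ, c⟫ := by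
  by_contra! hc
  have := h (|⟪ζ, a⟫ - u| / -⟪ζ, c⟫) (div_nonneg (abs_nonneg _) (neg_nonneg.2 hc.le))
  rw [inner_add_right, real_inner_smul_right, div_mul_eq_mul_div, div_neg,
    mul_div_assoc, div_self hc.ne, mul_one] at this
  linarith [le_abs_self (⟪ζ, a⟫ - u)]

theorem exists_mem_ne_zero_of_interior_nonempty [Nontrivial E] {s : Set E}
    (hs : (interior s).Nonempty) : ∃ x ∈ s, x ≠ 0 := by
  by_contra! h
  have : interior s ⊆ interior {0} := interior_mono fun x hx => h x hx
  rw [interior_singleton] at this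
  exact hs.ne_empty (Set.subset_empty_iff.1 this)

end

theorem stmt11_general {d : ℕ} {α : Type*}
    (C : Set (EuclideanSpace ℝ (Fin d)))
    (hCne : C.Nonempty)
    (hCcone : ∀ c ∈ C, ∀ s : ℝ, 0 ≤ s → s • c ∈ C)
    (hCproper : C ≠ Set.univ)
    (hCdualint : (interior {ξ : EuclideanSpace ℝ (Fin d) |
        ∀ c ∈ C, 0 ≤ (inner ℝ ξ c : ℝ)}).Nonempty)
    (J : α → EuclideanSpace ℝ (Fin d))
    (ysel : EuclideanSpace ℝ (Fin d) → α)
    (hysel : ∀ ζ ∈ ({ξ : EuclideanSpace ℝ (Fin d) | ∀ c ∈ C, 0 ≤ (inner ℝ ξ c : ℝ)} \ {0} :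
        Set (EuclideanSpace ℝ (Fin d))),
      ∀ y : α, (inner ℝ ζ (J (ysel ζ)) : ℝ) ≤ (inner ℝ ζ (J y) : ℝ)) :
    ∀ y₀ : α, J y₀ ∈ closure (convexHull ℝ
      (⋃ y ∈ ysel '' ({ξ : EuclideanSpace ℝ (Fin d) | ∀ c ∈ C, 0 ≤ (inner ℝ ξ c : ℝ)} \ {0} :
          Set (EuclideanSpace ℝ (Fin d))), ({J y} + C))) := by
  set K := {ξ : EuclideanSpace ℝ (Fin d) | ∀ c ∈ C, 0 ≤ (inner ℝ ξ c : ℝ)}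
  intro y₀
  by_contra hy₀
  obtain ⟨ζ, hζ⟩ := exists_inner_lt_of_notMem_closure_convexHull hy₀
  have hmem : ∀ ξ ∈ K \ {0}, ∀ c ∈ C, J (ysel ξ) + c ∈ ⋃ y ∈ ysel '' (K \ {0}), ({J y} + C) :=
    fun ξ hξ c hc => Set.mem_biUnion (Set.mem_image_of_mem ysel hξ) (Set.add_mem_add rfl hc)
  have h0C : (0 : EuclideanSpace ℝ (Fin d)) ∈ C := by
    simpa using hCcone _ hCne.some_mem 0 le_rfl
  have : Nontrivial (EuclideanSpace ℝ (Fin d)) :=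
    not_subsingleton_iff_nontrivial.1 fun _ => hCproper hCne.eq_univ
  obtain ⟨ζ₀, hζ₀⟩ := exists_mem_ne_zero_of_interior_nonempty hCdualint
  have hζK : ζ ∈ K := fun c hc => inner_nonneg_of_forall_lt_inner_add_smul
    fun s hs => hζ _ (hmem ζ₀ hζ₀ _ (hCcone c hc s hs))
  have hζ0 : ζ ≠ 0 := by
    rintro rfl
    simpa using hζ _ (hmem ζ₀ hζ₀ 0 h0C)
  have hlt := hζ _ (hmem ζ ⟨hζK, hζ0⟩ 0 h0C)
  rw [add_zero] at hlt
  exact (hysel ζ ⟨hζK, hζ0⟩ y₀).not_gt hlt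

/-- abstract core of Theorem 4.1: if for every `ζ ∈ C⁺ \ {0}` the element
`ysel ζ` minimizes `ζ·J(·)` over `𝒳` (here: over all of the nonempty type `α`), then every
value `J(y₀)` belongs to `Γ_M = cl co ⋃_{y ∈ M} (J(y)+C)` where `M = ysel '' (C⁺\{0})`. -/
theorem stmt11 {d : ℕ} {α : Type*} [Nonempty α]
    (C : Set (EuclideanSpace ℝ (Fin d)))
    (hCne : C.Nonempty) (hCclosed : IsClosed C) (hCconv : Convex ℝ C)
    (hCcone : ∀ c ∈ C, ∀ s : ℝ, 0 ≤ s → s • c ∈ C)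
    (hCproper : C ≠ Set.univ)
    (hCdualint : (interior {ξ : EuclideanSpace ℝ (Fin d) |
        ∀ c ∈ C, 0 ≤ (inner ℝ ξ c : ℝ)}).Nonempty)
    (J : α → EuclideanSpace ℝ (Fin d))
    (ysel : EuclideanSpace ℝ (Fin d) → α)
    (hysel : ∀ ζ ∈ ({ξ : EuclideanSpace ℝ (Fin d) | ∀ c ∈ C, 0 ≤ (inner ℝ ξ c : ℝ)} \ {0} :
        Set (EuclideanSpace ℝ (Fin d))),
      ∀ y : α, (inner ℝ ζ (J (ysel ζ)) : ℝ) ≤ (inner ℝ ζ (J y) : ℝ)) :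
    ∀ y₀ : α, J y₀ ∈ closure (convexHull ℝ
      (⋃ y ∈ ysel '' ({ξ : EuclideanSpace ℝ (Fin d) | ∀ c ∈ C, 0 ≤ (inner ℝ ξ c : ℝ)} \ {0} :
          Set (EuclideanSpace ℝ (Fin d))), ({J y} + C))) :=
  stmt11_general C hCne hCcone hCproper hCdualint J ysel hysel
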